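/- arXiv:2112.05998 — 2 statements merged into one kernel-verified Lean document; each statement's English description precedes it below -/
import Mathlib

section
/- Let U be an open subset of ℝⁿ, let f : U → ℝⁿ be of class C¹ with Jacobian J(x), and let K ⊆ U be compact. Then the following are equivalent: (1) there exist c > 0 and a Riemannian metric G on U (a smooth map G : U → ℝ^{n×n} with each G(x) symmetric positive definite) such that λ_G(x) ≤ −c for all x ∈ K, where λ_G(x) = max{ wᵀ(G(x)J(x) + ½Ġ(x))w : w ∈ ℝⁿ, wᵀG(x)w = 1, wᵀG(x)f(x) = 0 } and Ġ denotes the orbital derivative of G along f; (2) there exist c > 0 and a Riemannian metric G on U such that λ'_G(x) ≤ −c for all x ∈ K, where λ'_G(x) = max{ wᵀ(J(x)G(x) − ½Ġ(x))w : w ∈ ℝⁿ, wᵀw = 1, wᵀf(x) = 0 }. -/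
open Matrix

/-- Orbital derivative of a matrix-valued map `G` along the vector field `f`:
`Ġ(x) = Σⱼ fⱼ(x) ∂G/∂xⱼ(x)`, i.e. the directional derivative of each entry in direction `f x`. -/
noncomputable def orbDer {n : ℕ} (f : (Fin n → ℝ) → (Fin n → ℝ))
    (G : (Fin n → ℝ) → Matrix (Fin n) (Fin n) ℝ) (x : Fin n → ℝ) :
    Matrix (Fin n) (Fin n) ℝ :=
  Matrix.of fun k l => fderiv ℝ (fun y => G y k l) x (f x)

/-- A Riemannian metric on `U`: a smooth map into the symmetric positive definite matrices. -/
def IsRiemannianMetricOn {n : ℕ} (G : (Fin n → ℝ) → Matrix (Fin n) (Fin n) ℝ)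
    (U : Set (Fin n → ℝ)) : Prop :=
  (∀ k l, ContDiffOn ℝ (⊤ : ℕ∞) (fun y => G y k l) U) ∧
  ∀ x ∈ U, (G x).IsSymm ∧ (G x).PosDef

section Aux
attribute [local instance] Matrix.linftyOpNormedRing Matrix.linftyOpNormedAlgebra
variable {n : ℕ}
instance : CompleteSpace (Matrix (Fin n) (Fin n) ℝ) := FiniteDimensional.complete ℝ _
noncomputable def entryCLM (k l : Fin n) : Matrix (Fin n) (Fin n) ℝ →L[ℝ] ℝ :=
  LinearMap.toContinuousLinearMap
    { toFun := fun M => M k l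
      map_add' := fun _ _ => rfl
      map_smul' := fun _ _ => rfl }
lemma contDiffAt_matrix {G : (Fin n → ℝ) → Matrix (Fin n) (Fin n) ℝ} {x : Fin n → ℝ}
    (h : ∀ k l, ContDiffAt ℝ (⊤ : ℕ∞) (fun y => G y k l) x) :
    ContDiffAt ℝ (⊤ : ℕ∞) G x := by
  let e : (Fin n → Fin n → ℝ) ≃ₗ[ℝ] Matrix (Fin n) (Fin n) ℝ :=
    { toFun := fun M => M, invFun := fun M => M,
      map_add' := fun _ _ => rfl, map_smul' := fun _ _ => rfl,
      left_inv := fun _ => rfl, right_inv := fun _ => rfl }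
  have h1 : ContDiffAt ℝ (⊤ : ℕ∞) (fun y (k l : Fin n) => G y k l) x :=
    contDiffAt_pi.2 fun k => contDiffAt_pi.2 fun l => h k l
  have h2 := ((e.toContinuousLinearEquiv :
      (Fin n → Fin n → ℝ) →L[ℝ] Matrix (Fin n) (Fin n) ℝ).contDiff.contDiffAt).comp x h1
  exact h2.congr_of_eventuallyEq (Filter.Eventually.of_forall fun y => rfl)
lemma fderiv_entry {G : (Fin n → ℝ) → Matrix (Fin n) (Fin n) ℝ} {x : Fin n → ℝ}
    (hd : DifferentiableAt ℝ G x) (k l : Fin n) (v : Fin n → ℝ) :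
    fderiv ℝ (fun y => G y k l) x v = (fderiv ℝ G x v) k l := by
  have h := ((entryCLM (n := n) k l).hasFDerivAt).comp x hd.hasFDerivAt
  have h' : HasFDerivAt (fun y => G y k l) ((entryCLM k l).comp (fderiv ℝ G x)) x := h
  rw [h'.fderiv]
  rfl

lemma orbDer_inv {U : Set (Fin n → ℝ)} (hU : IsOpen U)
    {G : (Fin n → ℝ) → Matrix (Fin n) (Fin n) ℝ} (hG : IsRiemannianMetricOn G U)
    (f : (Fin n → ℝ) → (Fin n → ℝ)) {x : Fin n → ℝ} (hx : x ∈ U) :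
    orbDer f (fun y => (G y)⁻¹) x = -((G x)⁻¹ * orbDer f G x * (G x)⁻¹) := by
  classical
  have hGsm : ContDiffAt ℝ (⊤ : ℕ∞) G x :=
    contDiffAt_matrix fun k l => (hG.1 k l).contDiffAt (hU.mem_nhds hx)
  have hGd : DifferentiableAt ℝ G x := hGsm.differentiableAt (by simp)
  have hu : IsUnit (G x) := ((hG.2 x hx).2).isUnit
  have hux : (hu.unit : Matrix (Fin n) (Fin n) ℝ) = G x := hu.unit_spec
  have hinv : HasFDerivAt Ring.inverse
      (-(ContinuousLinearMap.mulLeftRight ℝ _ (↑hu.unit⁻¹) (↑hu.unit⁻¹))) (G x) := by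
    have := hasFDerivAt_ringInverse (𝕜 := ℝ) hu.unit
    rwa [hux] at this
  have hcomp := hinv.comp x hGd.hasFDerivAt
  have hcomp' : HasFDerivAt (fun y => (G y)⁻¹)
      ((-(ContinuousLinearMap.mulLeftRight ℝ _ (↑hu.unit⁻¹) (↑hu.unit⁻¹))).comp
        (fderiv ℝ G x)) x :=
    hcomp.congr_of_eventuallyEq
      (Filter.Eventually.of_forall fun y => by
        simp [Function.comp, Matrix.nonsing_inv_eq_ringInverse])
  have hDGval : fderiv ℝ G x (f x) = orbDer f G x := by
    ext k l
    rw [orbDer]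
    simp only [Matrix.of_apply]
    rw [fderiv_entry hGd k l]
  have huinv : ((hu.unit⁻¹ : (Matrix (Fin n) (Fin n) ℝ)ˣ) : Matrix (Fin n) (Fin n) ℝ)
      = (G x)⁻¹ := by
    rw [Matrix.coe_units_inv, hux]
  ext k l
  show fderiv ℝ (fun y => (G y)⁻¹ k l) x (f x) = _
  rw [fderiv_entry hcomp'.differentiableAt k l]
  erw [hcomp'.fderiv]
  simp only [ContinuousLinearMap.coe_comp', Function.comp_apply,
    ContinuousLinearMap.neg_apply, ContinuousLinearMap.mulLeftRight_apply, hDGval, huinv]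
  change (-((G x)⁻¹ * (fderiv ℝ G x (f x)) * (G x)⁻¹)) k l = _
  rw [hDGval]

lemma inv_riemannian {U : Set (Fin n → ℝ)} (hU : IsOpen U)
    {G : (Fin n → ℝ) → Matrix (Fin n) (Fin n) ℝ} (hG : IsRiemannianMetricOn G U) :
    IsRiemannianMetricOn (fun y => (G y)⁻¹) U := by
  classical
  constructor
  · intro k l x hx
    have hGsm : ContDiffAt ℝ (⊤ : ℕ∞) G x :=
      contDiffAt_matrix fun k l => (hG.1 k l).contDiffAt (hU.mem_nhds hx)
    have hu : IsUnit (G x) := ((hG.2 x hx).2).isUnit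
    have h0 : ContDiffAt ℝ (⊤ : ℕ∞) (Ring.inverse : Matrix (Fin n) (Fin n) ℝ →
        Matrix (Fin n) (Fin n) ℝ) (G x) := by
      have := contDiffAt_ringInverse (𝕜 := ℝ) (n := (⊤ : ℕ∞)) hu.unit
      rwa [hu.unit_spec] at this
    have h1 : ContDiffAt ℝ (⊤ : ℕ∞) (fun y => Ring.inverse (G y)) x := h0.comp x hGsm
    have h2 : ContDiffAt ℝ (⊤ : ℕ∞) (fun y => (G y)⁻¹ k l) x := by
      have h3 := ((entryCLM (n := n) k l).contDiff.contDiffAt).comp x h1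
      exact h3.congr_of_eventuallyEq (Filter.Eventually.of_forall fun y => by
        show (G y)⁻¹ k l = entryCLM k l (Ring.inverse (G y))
        rw [Matrix.nonsing_inv_eq_ringInverse]; rfl)
    exact h2.contDiffWithinAt
  · intro x hx
    obtain ⟨hsymm, hpos⟩ := hG.2 x hx
    refine ⟨?_, hpos.inv⟩
    show ((G x)⁻¹)ᵀ = (G x)⁻¹
    rw [Matrix.transpose_nonsing_inv, hsymm]
end Aux

section Aux2
variable {n : ℕ}

variable {n : ℕ}

lemma dot_mulVec_left (N M : Matrix (Fin n) (Fin n) ℝ) (w z : Fin n → ℝ) :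
    N.mulVec w ⬝ᵥ M.mulVec z = w ⬝ᵥ (Nᵀ * M).mulVec z := by
  rw [← Matrix.mulVec_mulVec, Matrix.dotProduct_mulVec w, Matrix.vecMul_transpose]

lemma mulVec_dot (N : Matrix (Fin n) (Fin n) ℝ) (w z : Fin n → ℝ) :
    N.mulVec w ⬝ᵥ z = w ⬝ᵥ Nᵀ.mulVec z := by
  rw [dotProduct_comm, Matrix.dotProduct_mulVec, ← Matrix.mulVec_transpose, dotProduct_comm]

lemma dot_smul_smul (M : Matrix (Fin n) (Fin n) ℝ) (s : ℝ) (w : Fin n → ℝ) :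
    (s • w) ⬝ᵥ M.mulVec (s • w) = s ^ 2 * (w ⬝ᵥ M.mulVec w) := by
  rw [Matrix.mulVec_smul, smul_dotProduct, dotProduct_smul, smul_eq_mul, smul_eq_mul]
  ring

lemma dot_self_nonneg (w : Fin n → ℝ) : 0 ≤ w ⬝ᵥ w :=
  Finset.sum_nonneg fun i _ => mul_self_nonneg (w i)

lemma dot_self_pos {w : Fin n → ℝ} (hw : w ≠ 0) : 0 < w ⬝ᵥ w :=
  lt_of_le_of_ne (dot_self_nonneg w) fun h => hw (dotProduct_self_eq_zero.mp h.symm)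

lemma quad_expand_add (M N : Matrix (Fin n) (Fin n) ℝ) (s : ℝ) (w : Fin n → ℝ) :
    w ⬝ᵥ (M + s • N).mulVec w = w ⬝ᵥ M.mulVec w + s * (w ⬝ᵥ N.mulVec w) := by
  rw [Matrix.add_mulVec, dotProduct_add, Matrix.smul_mulVec, dotProduct_smul, smul_eq_mul]

lemma quad_expand_sub (M N : Matrix (Fin n) (Fin n) ℝ) (s : ℝ) (w : Fin n → ℝ) :
    w ⬝ᵥ (M - s • N).mulVec w = w ⬝ᵥ M.mulVec w - s * (w ⬝ᵥ N.mulVec w) := by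
  rw [Matrix.sub_mulVec, dotProduct_sub, Matrix.smul_mulVec, dotProduct_smul, smul_eq_mul]

lemma homog_bound {c : ℝ} {M N : Matrix (Fin n) (Fin n) ℝ} {g : Fin n → ℝ}
    (hN : ∀ w : Fin n → ℝ, w ≠ 0 → 0 < w ⬝ᵥ N.mulVec w)
    (h : ∀ w : Fin n → ℝ, w ⬝ᵥ N.mulVec w = 1 → w ⬝ᵥ g = 0 → w ⬝ᵥ M.mulVec w ≤ -c) :
    ∀ w : Fin n → ℝ, w ⬝ᵥ g = 0 → w ⬝ᵥ M.mulVec w ≤ -c * (w ⬝ᵥ N.mulVec w) := by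
  intro w hw
  by_cases h0 : w = 0
  · subst h0
    simp
  · set t := w ⬝ᵥ N.mulVec w with ht
    have htpos : 0 < t := hN w h0
    set s : ℝ := (Real.sqrt t)⁻¹ with hs_def
    have hs2 : s ^ 2 = t⁻¹ := by
      rw [hs_def, inv_pow, Real.sq_sqrt htpos.le]
    have h1 : (s • w) ⬝ᵥ N.mulVec (s • w) = 1 := by
      rw [dot_smul_smul, hs2, ← ht, inv_mul_cancel₀ htpos.ne']
    have h2 : (s • w) ⬝ᵥ g = 0 := by
      rw [smul_dotProduct, hw, smul_zero]
    have h3 := h _ h1 h2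
    rw [dot_smul_smul, hs2] at h3
    have h4 : t * (t⁻¹ * (w ⬝ᵥ M.mulVec w)) ≤ t * (-c) :=
      mul_le_mul_of_nonneg_left h3 htpos.le
    rw [← mul_assoc, mul_inv_cancel₀ htpos.ne', one_mul] at h4
    linarith

lemma exists_min_quad {K : Set (Fin n → ℝ)} (hK : IsCompact K)
    {H : (Fin n → ℝ) → Matrix (Fin n) (Fin n) ℝ}
    (hcont : ∀ k l, ContinuousOn (fun y => H y k l) K)
    (hpos : ∀ x ∈ K, (H x).PosDef) :
    ∃ μ > (0:ℝ), ∀ x ∈ K, ∀ w : Fin n → ℝ, μ * (w ⬝ᵥ w) ≤ w ⬝ᵥ (H x).mulVec w := by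
  classical
  have hstar : ∀ w : Fin n → ℝ, star w = w := fun w => funext fun i => rfl
  have hposval : ∀ x ∈ K, ∀ w : Fin n → ℝ, w ≠ 0 → 0 < w ⬝ᵥ (H x).mulVec w := by
    intro x hx w hw
    have := (hpos x hx).dotProduct_mulVec_pos hw
    rwa [hstar] at this
  set S : Set (Fin n → ℝ) := {w | w ⬝ᵥ w = 1} with hS_def
  have hdotcont : Continuous fun w : Fin n → ℝ => w ⬝ᵥ w := by
    show Continuous fun w : Fin n → ℝ => ∑ i, w i * w i
    exact continuous_finset_sum _ fun i _ => (continuous_apply i).mul (continuous_apply i)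
  have hSclosed : IsClosed S := isClosed_eq hdotcont continuous_const
  have hSsub : S ⊆ Metric.closedBall 0 1 := by
    intro w hw
    rw [Metric.mem_closedBall, dist_zero_right]
    rw [pi_norm_le_iff_of_nonneg zero_le_one]
    intro i
    have hsingle : w i * w i ≤ 1 := by
      have := Finset.single_le_sum (f := fun j => w j * w j)
        (fun j _ => mul_self_nonneg (w j)) (Finset.mem_univ i)
      have hw1 : ∑ j, w j * w j = 1 := hw
      simpa [hw1] using this
    rw [Real.norm_eq_abs]
    nlinarith [abs_nonneg (w i), sq_abs (w i)]
  have hScomp : IsCompact S :=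
    (isCompact_closedBall (0 : Fin n → ℝ) 1).of_isClosed_subset hSclosed hSsub
  have hT : IsCompact (K ×ˢ S) := hK.prod hScomp
  have hφcont : ContinuousOn
      (fun p : (Fin n → ℝ) × (Fin n → ℝ) => p.2 ⬝ᵥ (H p.1).mulVec p.2) (K ×ˢ S) := by
    show ContinuousOn
      (fun p : (Fin n → ℝ) × (Fin n → ℝ) => ∑ k, p.2 k * ∑ l, H p.1 k l * p.2 l) (K ×ˢ S)
    apply continuousOn_finset_sum
    intro k _
    refine ContinuousOn.mul ?_ ?_
    · exact ((continuous_apply k).comp continuous_snd).continuousOn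
    · apply continuousOn_finset_sum
      intro l _
      refine ContinuousOn.mul ?_ ?_
      · exact (hcont k l).comp continuous_fst.continuousOn fun p hp => hp.1
      · exact ((continuous_apply l).comp continuous_snd).continuousOn
  rcases Set.eq_empty_or_nonempty (K ×ˢ S) with hTe | hTne
  · refine ⟨1, one_pos, ?_⟩
    intro x hx w
    by_cases h0 : w = 0
    · subst h0; simp
    · exfalso
      have htpos := dot_self_pos h0
      have hmem : ((Real.sqrt (w ⬝ᵥ w))⁻¹ • w) ∈ S := by
        show _ ⬝ᵥ _ = 1
        have : ((Real.sqrt (w ⬝ᵥ w))⁻¹ • w) ⬝ᵥ ((Real.sqrt (w ⬝ᵥ w))⁻¹ • w)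
            = ((Real.sqrt (w ⬝ᵥ w))⁻¹)^2 * (w ⬝ᵥ w) := by
          rw [smul_dotProduct, dotProduct_smul, smul_eq_mul, smul_eq_mul]; ring
        rw [this, inv_pow, Real.sq_sqrt htpos.le, inv_mul_cancel₀ htpos.ne']
      have : (x, (Real.sqrt (w ⬝ᵥ w))⁻¹ • w) ∈ K ×ˢ S := ⟨hx, hmem⟩
      rw [hTe] at this
      exact this
  · obtain ⟨p0, hp0, hmin⟩ := hT.exists_isMinOn hTne hφcont
    set μ := p0.2 ⬝ᵥ (H p0.1).mulVec p0.2 with hμ_def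
    have hp0S : p0.2 ∈ S := hp0.2
    have hp0ne : p0.2 ≠ 0 := by
      intro h
      have : p0.2 ⬝ᵥ p0.2 = 1 := hp0S
      rw [h] at this; simp at this
    have hμpos : 0 < μ := hposval p0.1 hp0.1 p0.2 hp0ne
    refine ⟨μ, hμpos, ?_⟩
    intro x hx w
    by_cases h0 : w = 0
    · subst h0; simp
    · have htpos := dot_self_pos h0
      set s : ℝ := (Real.sqrt (w ⬝ᵥ w))⁻¹ with hs_def
      have hs2 : s ^ 2 = (w ⬝ᵥ w)⁻¹ := by
        rw [hs_def, inv_pow, Real.sq_sqrt htpos.le]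
      have hmem : (s • w) ∈ S := by
        show _ ⬝ᵥ _ = 1
        have : (s • w) ⬝ᵥ (s • w) = s^2 * (w ⬝ᵥ w) := by
          rw [smul_dotProduct, dotProduct_smul, smul_eq_mul, smul_eq_mul]; ring
        rw [this, hs2, inv_mul_cancel₀ htpos.ne']
      have h5 := hmin (Set.mk_mem_prod hx hmem)
      simp only [hμ_def] at h5
      have h6 : μ ≤ (s • w) ⬝ᵥ (H x).mulVec (s • w) := h5
      rw [dot_smul_smul, hs2] at h6
      have h7 : (w ⬝ᵥ w) * μ ≤ (w ⬝ᵥ w) * ((w ⬝ᵥ w)⁻¹ * (w ⬝ᵥ (H x).mulVec w)) :=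
        mul_le_mul_of_nonneg_left h6 htpos.le
      rw [← mul_assoc, mul_inv_cancel₀ htpos.ne', one_mul] at h7
      linarith
end Aux2

theorem stmt_0 (n : ℕ) (U : Set (Fin n → ℝ)) (hU : IsOpen U)
    (f : (Fin n → ℝ) → (Fin n → ℝ)) (hf : ContDiffOn ℝ 1 f U)
    (J : (Fin n → ℝ) → Matrix (Fin n) (Fin n) ℝ)
    (hJ : ∀ x ∈ U, HasFDerivAt f ((J x).mulVecLin.toContinuousLinearMap) x)
    (K : Set (Fin n → ℝ)) (hK : IsCompact K) (hKU : K ⊆ U) :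
    (∃ c > (0:ℝ), ∃ G : (Fin n → ℝ) → Matrix (Fin n) (Fin n) ℝ,
        IsRiemannianMetricOn G U ∧
        ∀ x ∈ K, ∀ w : Fin n → ℝ,
          w ⬝ᵥ (G x).mulVec w = 1 → w ⬝ᵥ (G x).mulVec (f x) = 0 →
          w ⬝ᵥ (G x * J x + (1/2 : ℝ) • orbDer f G x).mulVec w ≤ -c)
    ↔
    (∃ c > (0:ℝ), ∃ G : (Fin n → ℝ) → Matrix (Fin n) (Fin n) ℝ,
        IsRiemannianMetricOn G U ∧
        ∀ x ∈ K, ∀ w : Fin n → ℝ,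
          w ⬝ᵥ w = 1 → w ⬝ᵥ f x = 0 →
          w ⬝ᵥ (J x * G x - (1/2 : ℝ) • orbDer f G x).mulVec w ≤ -c) := by
  have hstar : ∀ u : Fin n → ℝ, star u = u := fun u => funext fun i => rfl
  constructor
  · rintro ⟨c, hc, G, hGm, hbound⟩
    set H : (Fin n → ℝ) → Matrix (Fin n) (Fin n) ℝ := fun y => (G y)⁻¹ with hH_def
    have hHm : IsRiemannianMetricOn H U := inv_riemannian hU hGm
    obtain ⟨μ, hμ, hμbound⟩ := exists_min_quad hK
      (fun k l => ((hHm.1 k l).continuousOn).mono hKU)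
      (fun x hx => (hHm.2 x (hKU hx)).2)
    refine ⟨c * μ, mul_pos hc hμ, H, hHm, ?_⟩
    intro x hx w hw1 hw2
    have hxU := hKU hx
    obtain ⟨hAsymm, hApos⟩ := hGm.2 x hxU
    set A := G x with hA_def
    set B := (G x)⁻¹ with hB_def
    have hHx : H x = B := rfl
    have hdet : IsUnit A.det := (Matrix.isUnit_iff_isUnit_det A).mp hApos.isUnit
    have hBA : B * A = 1 := Matrix.nonsing_inv_mul A hdet
    have hAB : A * B = 1 := Matrix.mul_nonsing_inv A hdet
    have hBsymm : Bᵀ = B := by rw [hB_def, Matrix.transpose_nonsing_inv]; rw [hAsymm]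
    have horb : orbDer f H x = -(B * orbDer f G x * B) := orbDer_inv hU hGm f hxU
    set D := orbDer f G x with hD_def
    set v := B.mulVec w with hv_def
    have hNpos : ∀ u : Fin n → ℝ, u ≠ 0 → 0 < u ⬝ᵥ A.mulVec u := by
      intro u hu; have := hApos.dotProduct_mulVec_pos hu; rwa [hstar] at this
    have hscaled := homog_bound hNpos (fun u h1 h2 => hbound x hx u h1 h2)
    have hvg : v ⬝ᵥ A.mulVec (f x) = 0 := by
      rw [hv_def, dot_mulVec_left, hBsymm, hBA, Matrix.one_mulVec]
      exact hw2
    have hmain := hscaled v hvg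
    have m2 : Bᵀ * (A * J x) * B = J x * B := by
      rw [hBsymm, ← Matrix.mul_assoc B A, hBA, Matrix.one_mul]
    have m3 : Bᵀ * D * B = B * D * B := by rw [hBsymm]
    have idA : v ⬝ᵥ A.mulVec v = w ⬝ᵥ B.mulVec w := by
      rw [hv_def, dot_mulVec_left, Matrix.mulVec_mulVec, hBsymm, hBA, Matrix.one_mul]
    have idAJ : v ⬝ᵥ (A * J x).mulVec v = w ⬝ᵥ (J x * B).mulVec w := by
      rw [hv_def, dot_mulVec_left, Matrix.mulVec_mulVec, m2]
    have idD : v ⬝ᵥ D.mulVec v = w ⬝ᵥ (B * D * B).mulVec w := by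
      rw [hv_def, dot_mulVec_left, Matrix.mulVec_mulVec, m3]
    rw [quad_expand_add, idAJ, idD, idA] at hmain
    have hT : J x * H x - (1/2:ℝ) • orbDer f H x = J x * B + (1/2:ℝ) • (B * D * B) := by
      rw [horb, hHx, smul_neg, sub_neg_eq_add]
    rw [hT, quad_expand_add]
    have hμb := hμbound x hx w
    rw [hw1, mul_one] at hμb
    nlinarith [hmain, hμb, hc, hμ]
  · rintro ⟨c, hc, G, hGm, hbound⟩
    set H : (Fin n → ℝ) → Matrix (Fin n) (Fin n) ℝ := fun y => (G y)⁻¹ with hH_def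
    have hHm : IsRiemannianMetricOn H U := inv_riemannian hU hGm
    obtain ⟨μ, hμ, hμbound⟩ := exists_min_quad hK
      (fun k l => ((hHm.1 k l).continuousOn).mono hKU)
      (fun x hx => (hHm.2 x (hKU hx)).2)
    refine ⟨c * μ, mul_pos hc hμ, H, hHm, ?_⟩
    intro x hx v hv1 hv2
    have hxU := hKU hx
    obtain ⟨hAsymm, hApos⟩ := hGm.2 x hxU
    set A := G x with hA_def
    set B := (G x)⁻¹ with hB_def
    have hHx : H x = B := rfl
    have hdet : IsUnit A.det := (Matrix.isUnit_iff_isUnit_det A).mp hApos.isUnit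
    have hBA : B * A = 1 := Matrix.nonsing_inv_mul A hdet
    have hAB : A * B = 1 := Matrix.mul_nonsing_inv A hdet
    have hBsymm : Bᵀ = B := by rw [hB_def, Matrix.transpose_nonsing_inv]; rw [hAsymm]
    have horb : orbDer f H x = -(B * orbDer f G x * B) := orbDer_inv hU hGm f hxU
    set D := orbDer f G x with hD_def
    set w := B.mulVec v with hw_def
    have hv1' : v ⬝ᵥ B.mulVec v = 1 := hv1
    have hv2' : v ⬝ᵥ B.mulVec (f x) = 0 := hv2
    have hNpos : ∀ u : Fin n → ℝ, u ≠ 0 → 0 < u ⬝ᵥ (1 : Matrix (Fin n) (Fin n) ℝ).mulVec u := by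
      intro u hu; rw [Matrix.one_mulVec]; exact dot_self_pos hu
    have hscaled := homog_bound (g := f x) (M := J x * A - (1/2:ℝ) • D) hNpos
      (fun u h1 h2 => by
        rw [Matrix.one_mulVec] at h1
        exact hbound x hx u h1 h2)
    have hwg : w ⬝ᵥ f x = 0 := by
      rw [hw_def, mulVec_dot, hBsymm]
      exact hv2'
    have hmain := hscaled w hwg
    rw [Matrix.one_mulVec] at hmain
    have m2 : Bᵀ * (J x * A) * B = B * J x := by
      rw [hBsymm, ← Matrix.mul_assoc B (J x) A, Matrix.mul_assoc (B * J x) A B, hAB,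
        Matrix.mul_one]
    have m3 : Bᵀ * D * B = B * D * B := by rw [hBsymm]
    have idJA : w ⬝ᵥ (J x * A).mulVec w = v ⬝ᵥ (B * J x).mulVec v := by
      rw [hw_def, dot_mulVec_left, Matrix.mulVec_mulVec, m2]
    have idD : w ⬝ᵥ D.mulVec w = v ⬝ᵥ (B * D * B).mulVec v := by
      rw [hw_def, dot_mulVec_left, Matrix.mulVec_mulVec, m3]
    rw [quad_expand_sub, idJA, idD] at hmain
    have hT : H x * J x + (1/2:ℝ) • orbDer f H x = B * J x - (1/2:ℝ) • (B * D * B) := by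
      rw [horb, hHx, smul_neg, ← sub_eq_add_neg]
    rw [hT, quad_expand_sub]
    -- lower bound on w ⬝ᵥ w
    have hvw : v ⬝ᵥ w = 1 := by rw [hw_def]; exact hv1'
    have hCS0 := Finset.sum_mul_sq_le_sq_mul_sq Finset.univ v w
    simp only [pow_two] at hCS0
    have hCS : (v ⬝ᵥ w) * (v ⬝ᵥ w) ≤ (v ⬝ᵥ v) * (w ⬝ᵥ w) := hCS0
    have hμv := hμbound x hx v
    rw [hv1'] at hμv
    have hwb : μ ≤ w ⬝ᵥ w := by
      have h8 : μ * (v ⬝ᵥ v) * (w ⬝ᵥ w) ≤ 1 * (w ⬝ᵥ w) :=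
        mul_le_mul_of_nonneg_right hμv (dot_self_nonneg w)
      have h9 : (1:ℝ) ≤ (v ⬝ᵥ v) * (w ⬝ᵥ w) := by nlinarith [hCS, hvw]
      have h10 : μ * 1 ≤ μ * ((v ⬝ᵥ v) * (w ⬝ᵥ w)) := mul_le_mul_of_nonneg_left h9 hμ.le
      nlinarith [h8, h10]
    nlinarith [hmain, hwb, hc, hμ]
end

section
/- Let G be a Riemannian metric on ℝⁿ with polynomial entries, f a polynomial vector field on ℝⁿ with Jacobian J, and K = {x ∈ ℝⁿ : qᵢ(x) ≥ 0, i = 1,…,l} for polynomials qᵢ ∈ ℝ[X]. If there exist ε > 0, polynomials p₁, p₂ ∈ ℝ[X,W], and sums of squares s₁,…,s_l ∈ Σ²[X,W] such that −ε − Wᵀ(J(X)G(X) − ½Ġ(X))W − Σ_{i=1}^l sᵢ(X,W) qᵢ(X) + p₁(X,W)(|W|² − 1) + p₂(X,W) Wᵀf(X) is a sum of squares in ℝ[X,W], then λ'_G(x) ≤ −ε < 0 for all x ∈ K, where λ'_G(x) = max{ wᵀ(J(x)G(x) − ½Ġ(x))w : w ∈ ℝⁿ, wᵀw = 1, wᵀf(x)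 = 0 }. -/
open Matrix MvPolynomial

/-- A polynomial is a sum of squares (SOS) if it is a finite sum of squares of polynomials. -/
def IsSOS {σ : Type*} (p : MvPolynomial σ ℝ) : Prop :=
  ∃ (k : ℕ) (g : Fin k → MvPolynomial σ ℝ), p = ∑ i, (g i) ^ 2

lemma sos_nonneg {σ : Type*} {p : MvPolynomial σ ℝ} (h : IsSOS p) (y : σ → ℝ) :
    0 ≤ MvPolynomial.eval y p := by
  obtain ⟨k, g, rfl⟩ := h
  rw [map_sum]
  exact Finset.sum_nonneg fun i _ => by rw [map_pow]; positivity

theorem stmt_6 (n l : ℕ)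
    (fp : Fin n → MvPolynomial (Fin n) ℝ)
    (Gp : Matrix (Fin n) (Fin n) (MvPolynomial (Fin n) ℝ))
    -- `G` is a Riemannian metric on ℝⁿ with polynomial entries:
    (hG : ∀ x : Fin n → ℝ, (Gp.map (MvPolynomial.eval x)).IsSymm ∧
        (Gp.map (MvPolynomial.eval x)).PosDef)
    -- polynomial Jacobian `J` of `f` and orbital derivative `Ġ` of `G` along `f`:
    (Jp Gdot : Matrix (Fin n) (Fin n) (MvPolynomial (Fin n) ℝ))
    (hJp : Jp = Matrix.of fun i j => MvPolynomial.pderiv j (fp i))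
    (hGdot : Gdot = Matrix.of fun k m => ∑ j, fp j * MvPolynomial.pderiv j (Gp k m))
    -- the contraction matrix `J G − ½ Ġ`:
    (Mc : Matrix (Fin n) (Fin n) (MvPolynomial (Fin n) ℝ))
    (hMc : Mc = Jp * Gp - (MvPolynomial.C (1/2 : ℝ) : MvPolynomial (Fin n) ℝ) • Gdot)
    (q : Fin l → MvPolynomial (Fin n) ℝ)
    (K : Set (Fin n → ℝ)) (hK : K = {x | ∀ i, 0 ≤ MvPolynomial.eval x (q i)})
    -- the SOS certificate:
    (ε : ℝ) (hε : 0 < ε) (p₁ p₂ : MvPolynomial (Fin n ⊕ Fin n) ℝ)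
    (s : Fin l → MvPolynomial (Fin n ⊕ Fin n) ℝ) (hs : ∀ i, IsSOS (s i))
    (hcert : IsSOS (
        - MvPolynomial.C ε
        - ∑ i, ∑ j, MvPolynomial.X (Sum.inr i) *
            MvPolynomial.rename Sum.inl (Mc i j) * MvPolynomial.X (Sum.inr j)
        - ∑ i, s i * MvPolynomial.rename Sum.inl (q i)
        + p₁ * ((∑ i, MvPolynomial.X (Sum.inr i) ^ 2) - 1)
        + p₂ * ∑ i, MvPolynomial.X (Sum.inr i) * MvPolynomial.rename Sum.inl (fp i))) :
    (∀ x ∈ K, ∀ w : Fin n → ℝ,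
        w ⬝ᵥ w = 1 → w ⬝ᵥ (fun i => MvPolynomial.eval x (fp i)) = 0 →
        w ⬝ᵥ ((Mc.map (MvPolynomial.eval x)).mulVec w) ≤ -ε) ∧ -ε < 0 := by
  refine ⟨?_, by linarith⟩
  intro x hx w hw1 hw2
  rw [hK] at hx
  set y : Fin n ⊕ Fin n → ℝ := Sum.elim x w with hy
  have hnn := sos_nonneg hcert y
  simp only [map_add, map_sub, map_sum, _root_.map_mul, map_neg, map_pow, _root_.map_one, eval_X, eval_C,
    eval_rename, Sum.elim_comp_inl, hy, Sum.elim_inr] at hnn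
  have hA : w ⬝ᵥ ((Mc.map (MvPolynomial.eval x)).mulVec w)
      = ∑ i, ∑ j, w i * MvPolynomial.eval x (Mc i j) * w j := by
    simp only [dotProduct, mulVec, Matrix.map_apply, Finset.mul_sum]
    exact Finset.sum_congr rfl fun i _ => Finset.sum_congr rfl fun j _ => by ring
  have hS : 0 ≤ ∑ i, MvPolynomial.eval (Sum.elim x w) (s i) * MvPolynomial.eval x (q i) :=
    Finset.sum_nonneg fun i _ => mul_nonneg (sos_nonneg (hs i) _) (hx i)
  have hW : ∑ i, w i ^ 2 = 1 := by
    rw [← hw1]; simp [dotProduct, sq]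
  have hF : ∑ i, w i * MvPolynomial.eval x (fp i) = 0 := hw2
  rw [hA]
  rw [hW, hF] at hnn
  simp only [sub_self, mul_zero, add_zero] at hnn
  linarith
end
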